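/- arXiv:2502.05064 — 2 statements merged into one kernel-verified Lean document; each statement's English description precedes it below -/
import Mathlib

section
/- Let G be a group and x, y ∈ G elements satisfying x = [x^l, x^y] (where [u,v] = u⁻¹v⁻¹uv and x^y = y⁻¹xy) for some integer l. Then x lies in every term of the derived series of G; in particular, if x ≠ 1 then G is not residually solvable. -/
/-!
The relation writes `x` as the commutator of `(x ^ l)⁻¹` and `(y⁻¹ * x * y)⁻¹`, two elements
of every normal subgroup containing `x`. Since each term of the derived series is normal,
`x ∈ G⁽ⁿ⁾` gives `x ∈ ⁅G⁽ⁿ⁾, G⁽ⁿ⁾⁆ = G⁽ⁿ⁺¹⁾`.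
-/

open scoped commutatorElement

theorem mem_derivedSeries_of_forall_normal_mem_commutator {G : Type*} [Group G] {x : G}
    (h : ∀ N : Subgroup G, N.Normal → x ∈ N → x ∈ ⁅N, N⁆) (n : ℕ) :
    x ∈ derivedSeries G n := by
  induction n with
  | zero => trivial
  | succ n ih =>
    rw [derivedSeries_succ]
    exact h _ (derivedSeries_normal G n) ih

theorem Subgroup.Normal.mem_commutator_of_eq_commutator_zpow_conj {G : Type*} [Group G]
    {N : Subgroup G} (hN : N.Normal) {x y : G} {l : ℤ} (hx : x ∈ N)
    (hrel : x = (x ^ l)⁻¹ * (y⁻¹ * x * y)⁻¹ * (x ^ l) * (y⁻¹ * x * y)) :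
    x ∈ ⁅N, N⁆ := by
  have hconj : y⁻¹ * x * y ∈ N := by simpa using hN.conj_mem x hx y⁻¹
  have hcomm : x = ⁅(x ^ l)⁻¹, (y⁻¹ * x * y)⁻¹⁆ := by
    rw [commutatorElement_def, inv_inv, inv_inv]
    exact hrel
  rw [hcomm]
  exact Subgroup.commutator_mem_commutator (inv_mem (zpow_mem hx l)) (inv_mem hconj)

/-- If `x = [x^l, x^y]`, then `x` lies in every term of the derived series of `G`;
in particular, if `x ≠ 1` then `G` is not residually solvable (intersection of
the derived series is nontrivial). -/
theorem stmt1 {G : Type*} [Group G] (x y : G) (l : ℤ)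
    (hrel : x = (x ^ l)⁻¹ * (y⁻¹ * x * y)⁻¹ * (x ^ l) * (y⁻¹ * x * y)) :
    (∀ n : ℕ, x ∈ derivedSeries G n) ∧
      (x ≠ 1 → ¬ (∀ g : G, (∀ n : ℕ, g ∈ derivedSeries G n) → g = 1)) := by
  have hx : ∀ n : ℕ, x ∈ derivedSeries G n :=
    mem_derivedSeries_of_forall_normal_mem_commutator fun _ hN hxN =>
      hN.mem_commutator_of_eq_commutator_zpow_conj hxN hrel
  exact ⟨hx, fun hne hall => hne (hall x hx)⟩
end

section
/- In the one-relator group G(l,k) = ⟨a, b ∣ (b⁻¹ab)⁻¹ aˡ (b⁻¹ab) = aᵏ⟩ with k = l + 1 and l ≠ 0, the element a satisfies a = [aˡ, a^b], hence a lies in the intersection of all derived subgroups of G(l,k). -/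
/-!
The defining relation says that `a^b` conjugates `aˡ` to `aˡ⁺¹`, so `a = a⁻ˡ · (a^b)⁻¹ aˡ a^b`
is a commutator of `a⁻ˡ` and `(a^b)⁻¹`. Both lie in the normal closure `N` of `a`, hence
`N ≤ ⁅N, N⁆`, and a subgroup contained in its own commutator subgroup lies in every term of the
derived series.
-/

open scoped commutatorElement

theorem Subgroup.le_derivedSeries_of_le_commutator {G : Type*} [Group G] {H : Subgroup G}
    (hH : H ≤ ⁅H, H⁆) (n : ℕ) : H ≤ derivedSeries G n := by
  induction n with
  | zero => exact le_top
  | succ n ih => exact hH.trans (Subgroup.commutator_mono ih ih)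

theorem Subgroup.normalClosure_singleton_le_commutator {G : Type*} [Group G] {g u v : G}
    (hu : u ∈ normalClosure {g}) (hv : v ∈ normalClosure {g}) (hg : g = ⁅u, v⁆) :
    normalClosure {g} ≤ ⁅normalClosure {g}, normalClosure {g}⁆ := by
  have hg_mem := commutator_mem_commutator hu hv
  rw [← hg] at hg_mem
  exact normalClosure_le_normal (Set.singleton_subset_iff.mpr hg_mem)

theorem eq_commutator_of_conj_zpow_eq_zpow_add_one {G : Type*} [Group G] {x y : G} {l : ℤ}
    (h : x⁻¹ * y ^ l * x = y ^ (l + 1)) : y = (y ^ l)⁻¹ * x⁻¹ * y ^ l * x := by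
  rw [mul_assoc _ x⁻¹, mul_assoc, mul_assoc x⁻¹, ← mul_assoc x⁻¹, h, ← zpow_neg, ← zpow_add,
    neg_add_cancel_left, zpow_one]

namespace Stmt2

/-- The free group generators `a` and `b`. -/
def a : FreeGroup (Fin 2) := FreeGroup.of 0
def b : FreeGroup (Fin 2) := FreeGroup.of 1

/-- The relator `((b⁻¹ab)⁻¹ aˡ (b⁻¹ab)) a⁻ᵏ` of `G(l,k)`. -/
def rel (l k : ℤ) : FreeGroup (Fin 2) :=
  (b⁻¹ * a * b)⁻¹ * a ^ l * (b⁻¹ * a * b) * a ^ (-k)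

/-- The one-relator group `G(l,k) = ⟨a, b ∣ (b⁻¹ab)⁻¹ aˡ (b⁻¹ab) = aᵏ⟩`. -/
abbrev G (l k : ℤ) := PresentedGroup ({rel l k} : Set (FreeGroup (Fin 2)))

/-- The images of the generators in `G(l,k)`. -/
def A (l k : ℤ) : G l k := PresentedGroup.of 0
def B (l k : ℤ) : G l k := PresentedGroup.of 1

theorem conj_zpow_A_eq (l k : ℤ) :
    ((B l k)⁻¹ * A l k * B l k)⁻¹ * A l k ^ l * ((B l k)⁻¹ * A l k * B l k) = A l k ^ k := by
  rw [← mul_inv_eq_one, ← zpow_neg]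
  exact PresentedGroup.one_of_mem (Set.mem_singleton _)

theorem stmt2_general (l k : ℤ) (hk : k = l + 1) :
    (A l k = (A l k ^ l)⁻¹ * ((B l k)⁻¹ * A l k * B l k)⁻¹ * (A l k ^ l) *
      ((B l k)⁻¹ * A l k * B l k)) ∧
    (∀ n : ℕ, A l k ∈ derivedSeries (G l k) n) := by
  have hA := eq_commutator_of_conj_zpow_eq_zpow_add_one ((conj_zpow_A_eq l k).trans (by rw [hk]))
  set N := Subgroup.normalClosure {A l k}
  have haN : A l k ∈ N := Subgroup.subset_normalClosure (Set.mem_singleton _)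
  refine ⟨hA, fun n => Subgroup.le_derivedSeries_of_le_commutator ?_ n haN⟩
  have hconj : (B l k)⁻¹ * A l k * B l k ∈ N := by
    simpa only [inv_inv] using (Subgroup.normalClosure_normal).conj_mem _ haN (B l k)⁻¹
  refine Subgroup.normalClosure_singleton_le_commutator (inv_mem (zpow_mem haN l))
    (inv_mem hconj) ?_
  rw [commutatorElement_def, inv_inv, inv_inv]
  exact hA

/-- In `G(l, l+1)` with `l ≠ 0`, the element `a` satisfies `a = [aˡ, a^b]`,
hence lies in every term of the derived series. -/
theorem stmt2 (l k : ℤ) (hl : l ≠ 0) (hk : k = l + 1) :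
    (A l k = (A l k ^ l)⁻¹ * ((B l k)⁻¹ * A l k * B l k)⁻¹ * (A l k ^ l) *
      ((B l k)⁻¹ * A l k * B l k)) ∧
    (∀ n : ℕ, A l k ∈ derivedSeries (G l k) n) :=
  stmt2_general l k hk

end Stmt2
end
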